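/- Let q ∈ ℂ with q ≠ 0, let α, β, κ ∈ ℂ, and let λ : ℤ → ℂ be a grid of one of the three forms λ_x = αqˣ + βq⁻ˣ + κ, or λ_x = αx² + βx + κ, or λ_x = (−1)ˣ(αx + β) + κ. Fix u₀,u₁,u₂,u₃,u₄ ∈ ℂ and define, for x ∈ ℤ with λ_{x+1} ≠ λ_{x−1}, A₁(x) = (u₂ + u₃λ_x + u₄λ_x² − u₀λ_{x−1} − u₁λ_{x−1}λ_x)/(λ_{x+1} − λ_{x−1}) and A₂(x) = −(u₂ + u₃λ_x + u₄λ_x² − u₀λ_{x+1} − u₁λ_{x+1}λ_x)/(λ_{x+1} − λ_{x−1}). Then for every polynomial p ∈ ℂ[z] of degree n there exists a polynomial q̂ ∈ ℂ[z] of degree at most n+1 such that A₁(x)p(λ_{x+1}) + A₂(x)p(λ_{x−1}) = q̂(λ_x) for every x ∈ ℤ with λ_{x+1} ≠ λ_{x−1}. -/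

import Mathlib

/-!
On each of the three grids the neighbours `a = λ_{x+1}`, `b = λ_{x-1}` of `t = λ_x` satisfy
`a + b = e₁(t)` and `a b = e₂(t)` for fixed polynomials `e₁`, `e₂` of degrees at most one and two.
With `P(t) = u₂ + u₃ t + u₄ t²` the operator applied to `p` equals
`P(t) (p(a) - p(b)) / (a - b) - (u₀ + u₁ t) (b p(a) - a p(b)) / (a - b)`.
Both divided differences are symmetric in `a`, `b`, of degrees `n - 1` and `n`, hence polynomials
in `e₁(t)`, `e₂(t)` and so in `t`; the Horner step `p = X r + c` gives the recursion for them.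
-/

open Polynomial

section

variable {R : Type*} [CommRing R]

/-- The neighbours `λ (x + 1)`, `λ (x - 1)` are the roots of `z² - e₁(λ x) z + e₂(λ x)`. -/
def IsQuadraticGrid (lam : ℤ → R) : Prop :=
  ∃ e₁ e₂ : R[X], e₁.degree ≤ 1 ∧ e₂.degree ≤ 2 ∧
    ∀ x : ℤ, e₁.eval (lam x) = lam (x + 1) + lam (x - 1) ∧
      e₂.eval (lam x) = lam (x + 1) * lam (x - 1)

theorem degree_mul_le_of_degree_add_one_le {f D : R[X]} {k m : WithBot ℕ}
    (hf : f.degree ≤ k + 1) (hD : D.degree + 1 ≤ m) : (f * D).degree ≤ k + m :=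
  calc (f * D).degree ≤ k + 1 + D.degree := degree_mul_le_of_le hf le_rfl
    _ = k + (D.degree + 1) := by ac_rfl
    _ ≤ k + m := by gcongr

/-- `D` and `E` represent the divided differences `(p a - p b) / (a - b)` and
`(b p a - a p b) / (a - b)` as polynomials in `t`, where `e₁ t = a + b` and `e₂ t = a b`;
`D.degree + 1 ≤ n` is `deg D ≤ n - 1` without truncated subtraction. -/
theorem exists_dividedDifferences {e₁ e₂ : R[X]} (he₁ : e₁.degree ≤ 1) (he₂ : e₂.degree ≤ 2) :
    ∀ (n : ℕ) (p : R[X]), p.natDegree ≤ n →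
      ∃ D E : R[X], D.degree + 1 ≤ n ∧ E.degree ≤ n ∧
        ∀ a b t : R, e₁.eval t = a + b → e₂.eval t = a * b →
          p.eval a - p.eval b = (a - b) * D.eval t ∧
            b * p.eval a - a * p.eval b = (a - b) * E.eval t
  | 0, p, hp => by
    obtain ⟨c, rfl⟩ := natDegree_eq_zero.mp (Nat.le_zero.mp hp)
    refine ⟨0, -C c, by simp, by simpa using degree_C_le, fun a b t _ _ => ?_⟩
    simp only [eval_C, eval_neg, eval_zero]
    constructor <;> ring
  | n + 1, p, hp => by
    obtain ⟨D, E, hD, hE, hDE⟩ := exists_dividedDifferences he₁ he₂ n p.divX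
      (by rw [natDegree_divX_eq_natDegree_tsub_one]; omega)
    -- `r = p.divX` satisfies `r a = a D t - E t` and `r b = b D t - E t`.
    refine ⟨e₁ * D - E, e₂ * D - C (p.coeff 0), ?_, ?_, fun a b t h₁ h₂ => ?_⟩
    · calc (e₁ * D - E).degree + 1 ≤ max (e₁ * D).degree E.degree + 1 := by
            gcongr; exact degree_sub_le _ _
        _ ≤ (n + 1 : ℕ) := by
            have h := degree_mul_le_of_degree_add_one_le (k := 0) (by rwa [zero_add]) hD
            rw [zero_add] at h
            push_cast
            exact (max_add_add_right _ _ _).symm.le.trans (max_le (by gcongr) (by gcongr))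
    · refine (degree_sub_le _ _).trans
        (max_le ?_ (degree_C_le.trans (by exact_mod_cast Nat.zero_le _)))
      rw [Nat.cast_succ, add_comm]
      exact degree_mul_le_of_degree_add_one_le (by rwa [one_add_one_eq_two]) hD
    · obtain ⟨hD', hE'⟩ := hDE a b t h₁ h₂
      have hHorner : ∀ z, p.eval z = p.divX.eval z * z + p.coeff 0 := fun z => by
        conv_lhs => rw [← divX_mul_X_add p]
        simp only [eval_add, eval_mul, eval_X, eval_C]
      simp only [hHorner, eval_sub, eval_mul, eval_C, h₁, h₂]
      constructor
      · linear_combination (a + b) * hD' - hE'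
      · linear_combination a * b * hD'

end

theorem isQuadraticGrid_qQuadratic {K : Type*} [Field K] {q : K} (hq : q ≠ 0) (α β κ : K) :
    IsQuadraticGrid (fun x : ℤ => α * q ^ x + β * q ^ (-x) + κ) := by
  set s := q + q⁻¹
  refine ⟨C s * X + C (κ * (2 - s)),
    (X - C κ) ^ 2 + C (κ * s) * (X - C κ) + C (κ ^ 2 + α * β * (q - q⁻¹) ^ 2),
    by compute_degree, by compute_degree, fun x => ?_⟩
  simp only [zpow_neg, zpow_add₀ hq, zpow_sub₀ hq, zpow_one, eval_add, eval_sub, eval_mul,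
    eval_pow, eval_C, eval_X, s]
  constructor <;> (field_simp; ring)

theorem isQuadraticGrid_quadratic {R : Type*} [CommRing R] (α β κ : R) :
    IsQuadraticGrid (fun x : ℤ => α * (x : R) ^ 2 + β * (x : R) + κ) := by
  refine ⟨C 2 * X + C (2 * α), X ^ 2 - C (2 * α) * X + C (α ^ 2 + 4 * α * κ - β ^ 2),
    by compute_degree, by compute_degree, fun x => ?_⟩
  simp only [eval_add, eval_sub, eval_mul, eval_pow, eval_C, eval_X]
  push_cast
  constructor <;> ring

theorem isQuadraticGrid_alternating {K : Type*} [Field K] (α β κ : K) :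
    IsQuadraticGrid (fun x : ℤ => (-1 : K) ^ x * (α * (x : K) + β) + κ) := by
  refine ⟨-C 2 * X + C (4 * κ), X ^ 2 - C (4 * κ) * X + C (4 * κ ^ 2 - α ^ 2),
    by compute_degree, by compute_degree, fun x => ?_⟩
  have hsign : (-1 : K) ^ x * (-1 : K) ^ x = 1 := by
    rw [← mul_zpow, neg_one_mul, neg_neg, one_zpow]
  have hneg : (-1 : K) ≠ 0 := neg_ne_zero.mpr one_ne_zero
  simp only [zpow_add₀ hneg, zpow_sub₀ hneg, zpow_one, div_neg, div_one, eval_add, eval_sub,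
    eval_neg, eval_mul, eval_pow, eval_C, eval_X]
  push_cast
  constructor
  · ring
  · linear_combination α ^ 2 * hsign

theorem stmt1 (q α β κ : ℂ) (hq : q ≠ 0) (lam : ℤ → ℂ)
    (hgrid :
      (∀ x : ℤ, lam x = α * q ^ x + β * q ^ (-x) + κ) ∨
      (∀ x : ℤ, lam x = α * (x : ℂ) ^ 2 + β * (x : ℂ) + κ) ∨
      (∀ x : ℤ, lam x = (-1 : ℂ) ^ x * (α * (x : ℂ) + β) + κ))
    (u₀ u₁ u₂ u₃ u₄ : ℂ) (n : ℕ) (p : Polynomial ℂ) (hp : p.degree = n) :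
    ∃ qhat : Polynomial ℂ, qhat.degree ≤ (n + 1 : ℕ) ∧
      ∀ x : ℤ, lam (x + 1) ≠ lam (x - 1) →
        ((u₂ + u₃ * lam x + u₄ * (lam x) ^ 2 - u₀ * lam (x - 1) - u₁ * lam (x - 1) * lam x)
            / (lam (x + 1) - lam (x - 1))) * p.eval (lam (x + 1)) +
        (-((u₂ + u₃ * lam x + u₄ * (lam x) ^ 2 - u₀ * lam (x + 1) - u₁ * lam (x + 1) * lam x)
            / (lam (x + 1) - lam (x - 1)))) * p.eval (lam (x - 1)) = qhat.eval (lam x) := by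
  have hlam : IsQuadraticGrid lam := by
    rcases hgrid with h | h | h <;> rw [funext h]
    exacts [isQuadraticGrid_qQuadratic hq α β κ, isQuadraticGrid_quadratic α β κ,
      isQuadraticGrid_alternating α β κ]
  obtain ⟨e₁, e₂, he₁, he₂, hneighbours⟩ := hlam
  obtain ⟨D, E, hD, hE, hDE⟩ :=
    exists_dividedDifferences he₁ he₂ n p (natDegree_le_of_degree_le hp.le)
  set P : ℂ[X] := C u₄ * X ^ 2 + C u₃ * X + C u₂
  set L : ℂ[X] := C u₁ * X + C u₀
  refine ⟨P * D - L * E, ?_, fun x hx => ?_⟩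
  · have hP : P.degree ≤ 1 + 1 := by
      rw [one_add_one_eq_two]; exact degree_quadratic_le
    rw [Nat.cast_succ, add_comm]
    exact (degree_sub_le _ _).trans (max_le (degree_mul_le_of_degree_add_one_le hP hD)
      (degree_mul_le_of_le degree_linear_le hE))
  · obtain ⟨h₁, h₂⟩ := hneighbours x
    obtain ⟨hD', hE'⟩ := hDE (lam (x + 1)) (lam (x - 1)) (lam x) h₁ h₂
    have hx' : lam (x + 1) - lam (x - 1) ≠ 0 := sub_ne_zero.mpr hx
    simp only [P, L, eval_sub, eval_add, eval_mul, eval_pow, eval_C, eval_X]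
    field_simp
    linear_combination (u₂ + u₃ * lam x + u₄ * lam x ^ 2) * hD' - (u₀ + u₁ * lam x) * hE'
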